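/- For every family 𝐅 = {𝓕_a : a ∈ A}, where each 𝓕_a is a family of filters over a set I_a, and every class 𝓗 of topological spaces, there exists a family 𝐐 = {𝓠_b : b ∈ B}, where each 𝓠_b is a family of filters over some set, such that (𝐅c : 𝓗) = 𝐐c, i.e., a topological space X satisfies X × Y ∈ 𝐅c for all Y ∈ 𝓗 if and only if X is 𝐐-compact. -/

import Mathlib

/-! A sequence `z = (x, y) : I → X × Y` converges along `F` iff both `x` and `y` do. So `X × Y`
is sequencewise `𝓕`-compact iff, for every `y : I → Y`, `X` is sequencewise compact for the
filters of `𝓕` along which `y` converges; collecting these families over all `a : A`, all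
`Y ∈ 𝓗` and all `y` gives `𝐐`. -/

universe u

open Filter Topology

/-- A space `X` is sequencewise `𝓕`-compact if every `I`-indexed sequence in `X`
`F`-converges (to some point) for some `F ∈ 𝓕`. -/
def SeqFCompact {I : Type u} (𝓕 : Set (Filter I)) (X : Type u) [TopologicalSpace X] : Prop :=
  ∀ x : I → X, ∃ F ∈ 𝓕, ∃ p : X, Filter.Tendsto x F (𝓝 p)

def convergentFilters {I Y : Type u} [TopologicalSpace Y] (𝓕 : Set (Filter I)) (y : I → Y) :
    Set (Filter I) :=
  {F | F ∈ 𝓕 ∧ ∃ q : Y, Tendsto y F (𝓝 q)}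

theorem seqFCompact_prod_iff {I X Y : Type u} [TopologicalSpace X] [TopologicalSpace Y]
    (𝓕 : Set (Filter I)) :
    SeqFCompact 𝓕 (X × Y) ↔ ∀ y : I → Y, SeqFCompact (convergentFilters 𝓕 y) X := by
  constructor
  · intro h y x
    obtain ⟨F, hF, ⟨p, q⟩, hpq⟩ := h fun i => (x i, y i)
    exact ⟨F, ⟨hF, q, hpq.snd_nhds⟩, p, hpq.fst_nhds⟩
  · intro h z
    obtain ⟨F, ⟨hF, q, hq⟩, p, hp⟩ := h (fun i => (z i).2) fun i => (z i).1
    exact ⟨F, hF, (p, q), hp.prodMk_nhds hq⟩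

/-- For every family `𝐅 = {𝓕_a : a ∈ A}` of filter-families and every class `𝓗` of
topological spaces there is a family `𝐐 = {𝓠_b : b ∈ B}` such that `(𝐅c : 𝓗) = 𝐐c`:
`X × Y` is `𝐅`-compact for every `Y ∈ 𝓗` iff `X` is `𝐐`-compact. -/
theorem exists_Q_frolik_FCompact_for_class {A : Type u} (I : A → Type u)
    (𝓕 : ∀ a : A, Set (Filter (I a)))
    (H : ∀ Y : Type u, TopologicalSpace Y → Prop) :
    ∃ (B : Type u) (J : B → Type u) (𝓠 : ∀ b : B, Set (Filter (J b))),
      ∀ (X : Type u) [TopologicalSpace X],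
        (∀ (Y : Type u) (tY : TopologicalSpace Y), H Y tY →
            (∀ a : A, SeqFCompact (𝓕 a) (X × Y))) ↔
          (∀ b : B, SeqFCompact (𝓠 b) X) := by
  -- Indexing by the families themselves rather than by triples `(a, Y, y)` keeps `B` in `Type u`.
  refine ⟨Σ a : A, {S : Set (Filter (I a)) // ∃ (Y : Type u) (tY : TopologicalSpace Y),
      H Y tY ∧ ∃ y : I a → Y, S = @convergentFilters _ _ tY (𝓕 a) y},
    fun b => I b.1, fun b => b.2.1, fun X _ => ⟨?_, ?_⟩⟩
  · rintro h ⟨a, _, Y, tY, hY, y, rfl⟩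
    exact (seqFCompact_prod_iff _).1 (h Y tY hY a) y
  · intro h Y tY hY a
    exact (seqFCompact_prod_iff _).2 fun y => h ⟨a, _, Y, tY, hY, y, rfl⟩
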